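/- For λ, μ ∈ ℂ with λ ≠ μ, the algebras T³₀₂(λ) and T³₀₂(μ) (with multiplication e₁e₁ = e₂, e₁e₂ = λe₃ resp. μe₃, e₂e₁ = e₃, all other basis products zero) are not isomorphic as ℂ-algebras. -/
import Mathlib


/-- The 3-dimensional algebra `T³₀₂(λ)` with nonzero products
`e₁e₁ = e₂`, `e₁e₂ = λe₃`, `e₂e₁ = e₃`. -/
def mulT302 (lam : ℂ) (u v : Fin 3 → ℂ) : Fin 3 → ℂ :=
  ![0, u 0 * v 0, lam * (u 0 * v 1) + u 1 * v 0]

/-- For `λ ≠ μ` the algebras `T³₀₂(λ)` and `T³₀₂(μ)` are not isomorphic. -/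
theorem T302_pairwise_nonisomorphic (lam mu : ℂ) (h : lam ≠ mu) :
    ¬ ∃ φ : (Fin 3 → ℂ) ≃ₗ[ℂ] (Fin 3 → ℂ),
        ∀ u v, φ (mulT302 lam u v) = mulT302 mu (φ u) (φ v) := by
  rintro ⟨φ, hφ⟩
  set y : Fin 3 → ℂ := ![1, 0, 0] with hy
  set x : Fin 3 → ℂ := φ.symm y with hx
  have hxy : φ x = y := φ.apply_symm_apply y
  -- the identity x(xx) = lam • ((xx)x) in T³₀₂(lam)
  have h1 : mulT302 lam x (mulT302 lam x x)
      = lam • mulT302 lam (mulT302 lam x x) x := by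
    funext i
    fin_cases i <;> simp [mulT302] <;> ring_nf <;> tauto
  have h2 := hφ x (mulT302 lam x x)
  have h3 := hφ (mulT302 lam x x) x
  have h4 := hφ x x
  rw [h1, map_smul, h3, h4, hxy] at h2
  have := congrFun h2 2
  simp [mulT302, hy] at this
  exact h this
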